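/- arXiv:1005.4806 — 3 statements merged into one kernel-verified Lean document; each statement's English description precedes it below -/
import Mathlib

section
/- For integers u < v, the event A⁺_{u,v} that u leads to every vertex j ∈ {u+1, ..., v} by a directed path equals the event that for every j ∈ {u+1, ..., v}, some i ∈ {u, ..., j−1} has an edge to j; equivalently A⁺_{u,v} = {ξ(u+1) ≤ 1, ξ(u+2) ≤ 2, ..., ξ(v) ≤ v−u}, an intersection of v−u independent events. -/
open MeasureTheory ProbabilityTheory Filter

/-- Configuration: edge indicators. -/
abbrev Cfg := ℤ → ℤ → Bool

/-- There is an edge from `i` to `j`. -/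
def Edge (ω : Cfg) (i j : ℤ) : Prop := i < j ∧ ω i j = true

/-- There is a directed path from `i` to `j`. -/
def Leads (ω : Cfg) : ℤ → ℤ → Prop := Relation.TransGen (Edge ω)

/-- A list of vertices forming a path inside `{a,...,b}`. -/
def IsPathIn (ω : Cfg) (a b : ℤ) (l : List ℤ) : Prop :=
  l ≠ [] ∧ l.Chain' (Edge ω) ∧ ∀ x ∈ l, a ≤ x ∧ x ≤ b

/-- `L ω a b`: maximal number of edges of a path contained in `{a,...,b}`. -/
noncomputable def L (ω : Cfg) (a b : ℤ) : ℕ :=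
  sSup {n | ∃ l : List ℤ, IsPathIn ω a b l ∧ l.length = n + 1}

/-- `T ω i j`: maximal number of edges of a path from `i` to `j` (0 if none). -/
noncomputable def T (ω : Cfg) (i j : ℤ) : ℕ :=
  sSup {n | ∃ l : List ℤ, l.Chain' (Edge ω) ∧ l.head? = some i ∧
    l.getLast? = some j ∧ l.length = n + 1}

/-- The skeleton of the graph. -/
def Skel (ω : Cfg) : Set ℤ :=
  {n | (∀ j, n < j → Leads ω n j) ∧ (∀ j, j < n → Leads ω j n)}

/-- The model hypotheses: independent edges, edge `(i,j)` present w.p. `p (j-i)`. -/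
def GraphModel (p : ℕ → ℝ) (μ : Measure Cfg) : Prop :=
  IsProbabilityMeasure μ ∧
  iIndepFun
    (fun (e : ℤ × ℤ) (ω : Cfg) => ω e.1 e.2) μ ∧
  (∀ i j : ℤ, i < j → μ {ω | ω i j = true} = ENNReal.ofReal (p (j - i).toNat)) ∧
  (∀ i j : ℤ, j ≤ i → μ {ω | ω i j = true} = 0)

noncomputable def xi (ω : Cfg) (j : ℤ) : ℕ :=
  sInf {n : ℕ | 0 < n ∧ Edge ω (j - n) j}

/-! Every edge points forward, so the last edge of a path from `u` to `j` starts in `[u, j)`;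
conversely, if every `j ∈ (u, v]` receives an edge from `[u, j)`, these edges chain back to `u`
by strong induction on `j`. The event for `j` only reads the edges `(i, j)` ending at `j`, and
these blocks of independent coordinates are disjoint for distinct `j`. -/

theorem iIndepSet_of_measurableSet_biSup {Ω ι κ : Type*} {m0 : MeasurableSpace Ω}
    {μ : Measure Ω} [IsProbabilityMeasure μ] {m : ι → MeasurableSpace Ω} (hm : ∀ i, m i ≤ m0)
    (hind : iIndep m μ) {S : κ → Set ι} (hS : Pairwise (Function.onFun Disjoint S))
    {E : κ → Set Ω}
    (hE : ∀ k, MeasurableSet[⨆ i ∈ S k, m i] (E k)) : iIndepSet E μ := by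
  classical
  rw [iIndepSet_iff_meas_biInter fun k => iSup₂_le (fun i _ => hm i) _ (hE k)]
  intro t
  induction t using Finset.induction_on with
  | empty => simp
  | insert k t hk ih =>
    have hdisj : Disjoint (S k) (⋃ k' ∈ t, S k') :=
      Set.disjoint_iUnion₂_right.2 fun k' hk' => hS fun h => hk (h ▸ hk')
    have hrest : MeasurableSet[⨆ i ∈ ⋃ k' ∈ t, S k', m i] (⋂ k' ∈ t, E k') :=
      .biInter t.countable_toSet fun k' hk' =>
        have hle : ⨆ i ∈ S k', m i ≤ ⨆ i ∈ ⋃ k' ∈ t, S k', m i :=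
          biSup_mono fun i hi => Set.mem_biUnion hk' hi
        hle _ (hE k')
    rw [Finset.set_biInter_insert, Finset.prod_insert hk, ← ih,
      ((indep_iSup_of_disjoint hm hind hdisj).indepSet_of_measurableSet (hE k)
        hrest).measure_inter_eq_mul]

lemma le_of_reflTransGen_edge {ω : Cfg} {a b : ℤ} (h : Relation.ReflTransGen (Edge ω) a b) :
    a ≤ b := by
  induction h with
  | refl => exact le_rfl
  | tail _ hbc ih => exact ih.trans hbc.1.le

lemma Leads.exists_le_edge {ω : Cfg} {a c : ℤ} (h : Leads ω a c) :
    ∃ b, a ≤ b ∧ Edge ω b c := by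
  obtain ⟨b, hab, hbc⟩ := Relation.TransGen.tail'_iff.mp h
  exact ⟨b, le_of_reflTransGen_edge hab, hbc⟩

theorem leads_of_forall_exists_edge {ω : Cfg} {u v : ℤ}
    (H : ∀ j, u < j → j ≤ v → ∃ i, u ≤ i ∧ i < j ∧ Edge ω i j) (j : ℤ) (huj : u < j)
    (hjv : j ≤ v) : Leads ω u j := by
  obtain ⟨i, hui, hij, hedge⟩ := H j huj hjv
  rcases hui.eq_or_lt with rfl | hui
  · exact .single hedge
  · exact (leads_of_forall_exists_edge H i hui (hij.le.trans hjv)).tail hedge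
termination_by (j - u).toNat

theorem forall_leads_iff_forall_exists_edge (ω : Cfg) (u v : ℤ) :
    (∀ j, u < j → j ≤ v → Leads ω u j) ↔
      ∀ j, u < j → j ≤ v → ∃ i, u ≤ i ∧ i < j ∧ Edge ω i j := by
  refine ⟨fun H j huj hjv => ?_, leads_of_forall_exists_edge⟩
  obtain ⟨i, hui, hedge⟩ := (H j huj hjv).exists_le_edge
  exact ⟨i, hui, hedge.1, hedge⟩

lemma edge_sub_xi {ω : Cfg} {j : ℤ} (h : 0 < xi ω j) : Edge ω (j - xi ω j) j := by
  have hne : {n : ℕ | 0 < n ∧ Edge ω (j - n) j}.Nonempty := by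
    by_contra hempty
    rw [Set.not_nonempty_iff_eq_empty] at hempty
    simp [xi, hempty] at h
  exact (Nat.sInf_mem hne).2

lemma xi_pos_and_le_of_edge {ω : Cfg} {i j : ℤ} (h : Edge ω i j) :
    0 < xi ω j ∧ (xi ω j : ℤ) ≤ j - i := by
  have hij := h.1
  have hmem : (j - i).toNat ∈ {n : ℕ | 0 < n ∧ Edge ω (j - n) j} :=
    ⟨by omega, by rwa [Int.toNat_of_nonneg (by omega), sub_sub_cancel]⟩
  have hle : xi ω j ≤ (j - i).toNat := Nat.sInf_le hmem
  exact ⟨(Nat.sInf_mem ⟨_, hmem⟩).1, by omega⟩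

theorem exists_edge_iff_xi (ω : Cfg) (u j : ℤ) :
    (∃ i, u ≤ i ∧ i < j ∧ Edge ω i j) ↔ 0 < xi ω j ∧ (xi ω j : ℤ) ≤ j - u := by
  constructor
  · rintro ⟨i, hui, -, hedge⟩
    have hxi := xi_pos_and_le_of_edge hedge
    exact ⟨hxi.1, by omega⟩
  · rintro ⟨hpos, hle⟩
    exact ⟨j - xi ω j, by omega, by omega, edge_sub_xi hpos⟩

lemma measurableSet_exists_edge (u j : ℤ) :
    MeasurableSet[⨆ e ∈ {e : ℤ × ℤ | e.2 = j}, .comap (fun ω : Cfg => ω e.1 e.2) inferInstance]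
      {ω : Cfg | ∃ i, u ≤ i ∧ i < j ∧ Edge ω i j} := by
  have hset : {ω : Cfg | ∃ i, u ≤ i ∧ i < j ∧ Edge ω i j} =
      ⋃ i ∈ Set.Ico u j, (fun ω : Cfg => ω i j) ⁻¹' {true} := by
    ext ω
    simp [Edge, and_assoc]
  rw [hset]
  refine .biUnion (Set.to_countable _) fun i _ => ?_
  refine le_iSup₂ (f := fun (e : ℤ × ℤ) (_ : e ∈ {e : ℤ × ℤ | e.2 = j}) =>
    MeasurableSpace.comap (fun ω : Cfg => ω e.1 e.2) inferInstance) (i, j) rfl _ ?_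
  exact comap_measurable _ (measurableSet_singleton true)

theorem stmt_3_general (p : ℕ → ℝ)
    (μ : Measure Cfg) (hmodel : GraphModel p μ) (u v : ℤ) :
    (∀ ω : Cfg,
      ((∀ j, u < j → j ≤ v → Leads ω u j) ↔
        (∀ j, u < j → j ≤ v → ∃ i, u ≤ i ∧ i < j ∧ Edge ω i j)) ∧
      ((∀ j, u < j → j ≤ v → Leads ω u j) ↔
        (∀ j, u < j → j ≤ v → 0 < xi ω j ∧ (xi ω j : ℤ) ≤ j - u))) ∧
    iIndepSet
      (fun j : Finset.Ioc u v => {ω : Cfg | ∃ i, u ≤ i ∧ i < (j : ℤ) ∧ Edge ω i (j : ℤ)})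
      μ := by
  obtain ⟨hprob, hindep, -⟩ := hmodel
  refine ⟨fun ω => ⟨forall_leads_iff_forall_exists_edge ω u v,
    (forall_leads_iff_forall_exists_edge ω u v).trans ?_⟩, ?_⟩
  · exact forall_congr' fun j => forall_congr' fun _ =>
      forall_congr' fun _ => exists_edge_iff_xi ω u j
  have hdisj :
      Pairwise (Function.onFun Disjoint fun j : Finset.Ioc u v => {e : ℤ × ℤ | e.2 = j}) :=
    fun j k hjk => Set.disjoint_left.2 fun e hj hk => hjk (Subtype.ext (hj.symm.trans hk))
  exact iIndepSet_of_measurableSet_biSup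
    (m := fun e : ℤ × ℤ => MeasurableSpace.comap (fun ω : Cfg => ω e.1 e.2) inferInstance)
    (fun e => Measurable.comap_le (by fun_prop))
    hindep.iIndep hdisj fun j => measurableSet_exists_edge u j

/-- description of the event `A⁺_{u,v}` and independence. -/
theorem stmt_3 (p : ℕ → ℝ) (hp : ∀ k, 0 ≤ p k ∧ p k < 1)
    (μ : Measure Cfg) (hmodel : GraphModel p μ) (u v : ℤ) (huv : u < v) :
    (∀ ω : Cfg,
      ((∀ j, u < j → j ≤ v → Leads ω u j) ↔
        (∀ j, u < j → j ≤ v → ∃ i, u ≤ i ∧ i < j ∧ Edge ω i j)) ∧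
      ((∀ j, u < j → j ≤ v → Leads ω u j) ↔
        (∀ j, u < j → j ≤ v → 0 < xi ω j ∧ (xi ω j : ℤ) ≤ j - u))) ∧
    iIndepSet
      (fun j : Finset.Ioc u v => {ω : Cfg | ∃ i, u ≤ i ∧ i < (j : ℤ) ∧ Edge ω i (j : ℤ)})
      μ :=
  stmt_3_general p μ hmodel u v
end

section
/- Define the Markov chain on ℤ₊ by x_0 = 0 and x_{n+1} = max(x_n, ξ(−n)) − 1 where ξ(0), ξ(−1), ... are i.i.d. positive integer random variables with 𝔼[ξ] < ∞ and ℙ(ξ = 1) > 0. Then ν = inf{n ≥ 1 : x_n = 0} is almost surely finite. -/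
open MeasureTheory ProbabilityTheory Filter

/-- The Markov chain `x₀ = 0`, `x_{n+1} = max(x_n, ξ(−n)) − 1`. -/
def xchain {Ω : Type*} (ξ : ℕ → Ω → ℕ) : ℕ → Ω → ℕ
  | 0 => fun _ => 0
  | n + 1 => fun ω => max (xchain ξ n ω) (ξ n ω) - 1

/-!
The chain is back at `0` at time `n` exactly when `ξ k + k ≤ n` for every `k < n`. For
`n = 2 ^ (m + 1)`, the constraints coming from the dyadic block `k ∈ [2 ^ m, 2 ^ (m + 1))` hold
with probability `∏_{j ≤ 2 ^ m} ℙ(ξ ≤ j)`. This is bounded below uniformly in `m`, since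
`∑ ℙ(ξ > j) = 𝔼 ξ < ∞` and every factor is at least `ℙ(ξ = 1) > 0`. The blocks are disjoint, so
these events are independent, and by the second Borel–Cantelli lemma infinitely many of them
occur. By the first Borel–Cantelli lemma, `ξ k ≤ k` for all large `k`, and this settles the
indices below the block.
-/

open Function
open scoped ENNReal

lemma xchain_le_iff {Ω : Type*} (ξ : ℕ → Ω → ℕ) (ω : Ω) :
    ∀ n m : ℕ, xchain ξ n ω ≤ m ↔ ∀ k < n, ξ k ω + k ≤ m + n
  | 0, m => by simp [xchain]
  | n + 1, m => by
    have ih := xchain_le_iff ξ ω n (m + 1)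
    change max (xchain ξ n ω) (ξ n ω) - 1 ≤ m ↔ _
    rw [Nat.sub_le_iff_le_add, max_le_iff, ih]
    constructor
    · rintro ⟨hlt, hn⟩ k hk
      rcases Nat.lt_succ_iff_lt_or_eq.mp hk with hk | rfl
      · linarith [hlt k hk]
      · omega
    · intro h
      exact ⟨fun k hk => by linarith [h k (by omega)], by linarith [h n n.lt_succ_self]⟩

lemma xchain_eq_zero_iff {Ω : Type*} (ξ : ℕ → Ω → ℕ) (ω : Ω) (n : ℕ) :
    xchain ξ n ω = 0 ↔ ∀ k < n, ξ k ω + k ≤ n := by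
  simpa using xchain_le_iff ξ ω n 0

lemma xchain_two_pow_eq_zero {Ω : Type*} (ξ : ℕ → Ω → ℕ) (ω : Ω) {K m : ℕ}
    (hearly : ∀ k < K, ξ k ω + k ≤ 2 ^ (m + 1)) (hlate : ∀ k ≥ K, ξ k ω ≤ k)
    (hblock : ∀ k ∈ Finset.Ico (2 ^ m) (2 ^ (m + 1)), ξ k ω + k ≤ 2 ^ (m + 1)) :
    xchain ξ (2 ^ (m + 1)) ω = 0 := by
  rw [xchain_eq_zero_iff]
  intro k hk
  by_cases hkK : k < K
  · exact hearly k hkK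
  by_cases hkm : k < 2 ^ m
  · have := hlate k (not_lt.mp hkK)
    rw [pow_succ]; omega
  · exact hblock k (Finset.mem_Ico.mpr ⟨not_lt.mp hkm, hk⟩)

lemma ENNReal.one_sub_sum_le_prod_one_sub {ι : Type*} (s : Finset ι) {q : ι → ℝ≥0∞}
    (hq : ∀ i ∈ s, q i ≤ 1) : 1 - ∑ i ∈ s, q i ≤ ∏ i ∈ s, (1 - q i) := by
  classical
  induction s using Finset.induction_on with
  | empty => simp
  | insert a s ha ih =>
    rw [Finset.prod_insert ha, Finset.sum_insert ha]
    have hP : ∏ i ∈ s, (1 - q i) ≤ 1 := Finset.prod_le_one' fun _ _ => tsub_le_self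
    calc 1 - (q a + ∑ i ∈ s, q i) = (1 - ∑ i ∈ s, q i) - q a := by
          rw [add_comm, tsub_add_eq_tsub_tsub]
      _ ≤ ∏ i ∈ s, (1 - q i) - q a * ∏ i ∈ s, (1 - q i) := by
          gcongr
          · exact ih fun i hi => hq i (Finset.mem_insert_of_mem hi)
          · exact mul_le_of_le_one_right' hP
      _ = (1 - q a) * ∏ i ∈ s, (1 - q i) := by
          rw [ENNReal.sub_mul fun _ _ => ne_top_of_le_ne_top ENNReal.one_ne_top hP, one_mul]

lemma ENNReal.exists_pos_forall_le_prod {f : ℕ → ℝ≥0∞} (hpos : ∀ j, 0 < f j)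
    (hle : ∀ j, f j ≤ 1) (hsum : ∑' j, (1 - f j) ≠ ∞) :
    ∃ c > 0, ∀ s : Finset ℕ, c ≤ ∏ j ∈ s, f j := by
  obtain ⟨J, hJ⟩ : ∃ J, ∑' j, (1 - f (j + J)) < 2⁻¹ :=
    ((ENNReal.tendsto_sum_nat_add _ hsum).eventually_lt_const (by simp)).exists
  refine ⟨(∏ j ∈ Finset.range J, f j) * 2⁻¹,
    ENNReal.mul_pos (Finset.prod_ne_zero_iff.mpr fun j _ => (hpos j).ne') (by simp),
    fun s => ?_⟩
  rw [← Finset.prod_filter_mul_prod_filter_not s (· < J)]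
  refine mul_le_mul' ?_ ?_
  · exact Finset.prod_le_prod_of_subset_of_le_one' (fun j hj => by simp_all)
      fun j _ _ => hle j
  · set t := s.filter (¬ · < J)
    have htail : ∑ j ∈ t, (1 - f j) ≤ ∑' j, (1 - f (j + J)) := by
      calc ∑ j ∈ t, (1 - f j) = ∑ j ∈ t.image (· - J), (1 - f (j + J)) := by
            rw [Finset.sum_image fun x hx y hy _ => by simp_all [t]; omega]
            exact Finset.sum_congr rfl fun j hj => by simp_all [t]
        _ ≤ _ := ENNReal.sum_le_tsum _
    calc (2⁻¹ : ℝ≥0∞) = 1 - 2⁻¹ := ENNReal.one_sub_inv_two.symm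
      _ ≤ 1 - ∑ j ∈ t, (1 - f j) := by gcongr; exact htail.trans hJ.le
      _ ≤ ∏ j ∈ t, (1 - (1 - f j)) :=
          ENNReal.one_sub_sum_le_prod_one_sub t fun _ _ => tsub_le_self
      _ = ∏ j ∈ t, f j :=
          Finset.prod_congr rfl fun j _ => ENNReal.sub_sub_cancel one_ne_top (hle j)

lemma tsum_measure_lt_eq_lintegral {Ω : Type*} [MeasurableSpace Ω] (μ : Measure Ω)
    {f : Ω → ℕ} (hf : Measurable f) :
    ∑' j : ℕ, μ {ω | j < f ω} = ∫⁻ ω, (f ω : ℝ≥0∞) ∂μ := by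
  have hset (j : ℕ) : MeasurableSet {ω | j < f ω} := measurableSet_lt measurable_const hf
  calc ∑' j : ℕ, μ {ω | j < f ω}
      = ∑' j : ℕ, ∫⁻ ω, {ω | j < f ω}.indicator 1 ω ∂μ := by
        simp_rw [lintegral_indicator_one (hset _)]
    _ = ∫⁻ ω, ∑' j : ℕ, {ω | j < f ω}.indicator 1 ω ∂μ :=
        (lintegral_tsum fun j => (measurable_one.indicator (hset j)).aemeasurable).symm
    _ = ∫⁻ ω, (f ω : ℝ≥0∞) ∂μ := by
        congr 1 with ω
        rw [tsum_eq_sum (s := Finset.range (f ω)) fun j hj => by simp_all]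
        simp [Set.indicator_apply, Finset.filter_true_of_mem]

lemma pairwise_disjoint_Ico_two_pow :
    Pairwise (Disjoint on fun m : ℕ => Finset.Ico (2 ^ m) (2 ^ (m + 1))) := by
  intro m m' hne
  wlog hlt : m < m' generalizing m m'
  · exact (this hne.symm (by omega)).symm
  have : 2 ^ (m + 1) ≤ 2 ^ m' := Nat.pow_le_pow_right two_pos hlt
  exact Finset.disjoint_left.mpr fun k hk hk' => by simp at hk hk'; omega

lemma ProbabilityTheory.iIndepFun.iIndepSet_biInter_preimage {Ω ι β : Type*}
    [MeasurableSpace Ω] [MeasurableSpace β] {μ : Measure Ω} {X : ι → Ω → β}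
    (hX : iIndepFun X μ) (hXm : ∀ i, Measurable (X i)) {B : ℕ → Finset ι}
    (hB : Pairwise (Disjoint on B)) {A : ℕ → ι → Set β} (hA : ∀ m i, MeasurableSet (A m i)) :
    iIndepSet (fun m => ⋂ i ∈ B m, X i ⁻¹' A m i) μ := by
  classical
  have hblock (S : Finset ℕ) (A' : ι → Set β) (hA' : ∀ i, MeasurableSet (A' i)) :
      μ (⋂ i ∈ S.biUnion B, X i ⁻¹' A' i) = ∏ m ∈ S, μ (⋂ i ∈ B m, X i ⁻¹' A' i) := by
    rw [hX.meas_biInter fun i _ => ⟨A' i, hA' i, rfl⟩,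
      Finset.prod_biUnion (hB.set_pairwise _)]
    exact Finset.prod_congr rfl fun m _ => (hX.meas_biInter fun i _ => ⟨A' i, hA' i, rfl⟩).symm
  rw [iIndepSet_iff_meas_biInter fun m =>
    Finset.measurableSet_biInter _ fun i _ => hXm i (hA m i)]
  intro S
  -- by disjointness, `A' i` is the constraint of the unique block of `S` containing `i`
  set A' : ι → Set β := fun i => ⋂ m ∈ S.filter (i ∈ B ·), A m i
  have hA'm : ∀ m ∈ S, ∀ i ∈ B m, A' i = A m i := by
    intro m hm i hi
    have : S.filter (i ∈ B ·) = {m} := by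
      ext m'
      simp only [Finset.mem_filter, Finset.mem_singleton]
      refine ⟨fun ⟨_, hi'⟩ => by_contra fun hne => Finset.disjoint_left.mp (hB hne) hi' hi,
        by rintro rfl; exact ⟨hm, hi⟩⟩
    change ⋂ m ∈ S.filter (i ∈ B ·), A m i = A m i
    rw [this, Finset.set_biInter_singleton]
  calc μ (⋂ m ∈ S, ⋂ i ∈ B m, X i ⁻¹' A m i) = μ (⋂ i ∈ S.biUnion B, X i ⁻¹' A' i) := by
        congr 1; ext ω; simp [A']; grind
    _ = ∏ m ∈ S, μ (⋂ i ∈ B m, X i ⁻¹' A' i) :=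
        hblock S A' fun i => Finset.measurableSet_biInter _ fun m _ => hA m i
    _ = ∏ m ∈ S, μ (⋂ i ∈ B m, X i ⁻¹' A m i) := by
        refine Finset.prod_congr rfl fun m hm => ?_
        congr 1; exact Set.iInter₂_congr fun i hi => by rw [hA'm m hm i hi]

def returnBlock {Ω : Type*} (ξ : ℕ → Ω → ℕ) (m : ℕ) : Set Ω :=
  ⋂ k ∈ Finset.Ico (2 ^ m) (2 ^ (m + 1)), ξ k ⁻¹' {x | x + k ≤ 2 ^ (m + 1)}

lemma exists_pos_le_measure_returnBlock {Ω : Type*} [MeasurableSpace Ω] {μ : Measure Ω}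
    [IsProbabilityMeasure μ] {ξ : ℕ → Ω → ℕ} (hmeas : Measurable (ξ 0))
    (hindep : iIndepFun ξ μ) (hident : ∀ k l : ℕ, IdentDistrib (ξ k) (ξ l) μ μ)
    (hsum : ∑' j : ℕ, μ {ω | j < ξ 0 ω} ≠ ∞) (hone : 0 < μ {ω | ξ 0 ω = 1}) :
    ∃ c > 0, ∀ m, c ≤ μ (returnBlock ξ m) := by
  set f : ℕ → ℝ≥0∞ := fun j => μ {ω | ξ 0 ω ≤ j + 1}
  have hcompl (j : ℕ) : 1 - f j = μ {ω | j + 1 < ξ 0 ω} := by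
    rw [show {ω | j + 1 < ξ 0 ω} = (ξ 0 ⁻¹' Set.Iic (j + 1))ᶜ by ext; simp,
      prob_compl_eq_one_sub (hmeas measurableSet_Iic)]
    rfl
  obtain ⟨c, hc, hcf⟩ := ENNReal.exists_pos_forall_le_prod (f := f)
    (fun j => hone.trans_le (measure_mono fun ω (h : ξ 0 ω = 1) => by simp [h]))
    (fun _ => prob_le_one)
    (ne_top_of_le_ne_top hsum (ENNReal.tsum_le_tsum fun j => by
      rw [hcompl]; exact measure_mono fun ω (h : j + 1 < ξ 0 ω) => by simp; omega))
  refine ⟨c, hc, fun m => ?_⟩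
  set N := 2 ^ (m + 1)
  have hfactor : ∀ k ∈ Finset.Ico (2 ^ m) N,
      μ (ξ k ⁻¹' {x | x + k ≤ N}) = f (N - 1 - k) := by
    intro k hk
    rw [(hident k 0).measure_mem_eq .of_discrete]
    congr 1 with ω
    simp at hk ⊢; omega
  calc c ≤ ∏ j ∈ (Finset.Ico (2 ^ m) N).image (N - 1 - ·), f j := hcf _
    _ = ∏ k ∈ Finset.Ico (2 ^ m) N, f (N - 1 - k) :=
        Finset.prod_image fun k hk l hl _ => by simp at hk hl; omega
    _ = μ (returnBlock ξ m) := by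
        rw [returnBlock, hindep.meas_biInter fun k _ => ⟨_, .of_discrete, rfl⟩]
        exact (Finset.prod_congr rfl hfactor).symm

theorem stmt_11_general {Ω : Type*} [MeasurableSpace Ω] (μ : Measure Ω)
    [IsProbabilityMeasure μ]
    (ξ : ℕ → Ω → ℕ) (hmeas : ∀ k, Measurable (ξ k))
    (hindep : iIndepFun ξ μ)
    (hident : ∀ k l : ℕ, IdentDistrib (ξ k) (ξ l) μ μ)
    (hmean : ∫⁻ ω, (ξ 0 ω : ENNReal) ∂μ < ⊤)
    (hone : 0 < μ {ω | ξ 0 ω = 1}) :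
    ∀ᵐ ω ∂μ, ∃ n : ℕ, 1 ≤ n ∧ xchain ξ n ω = 0 := by
  have htail : ∑' j : ℕ, μ {ω | j < ξ 0 ω} ≠ ∞ :=
    ((tsum_measure_lt_eq_lintegral μ (hmeas 0)).trans_lt hmean).ne
  obtain ⟨c, hc, hcle⟩ := exists_pos_le_measure_returnBlock (hmeas 0) hindep hident htail hone
  have hmeasBlock (m : ℕ) : MeasurableSet (returnBlock ξ m) :=
    Finset.measurableSet_biInter _ fun k _ => hmeas k .of_discrete
  have hfreq : ∀ᵐ ω ∂μ, ∃ᶠ m in atTop, ω ∈ returnBlock ξ m := by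
    have hindepBlock : iIndepSet (returnBlock ξ) μ :=
      hindep.iIndepSet_biInter_preimage hmeas pairwise_disjoint_Ico_two_pow
        fun _ _ => .of_discrete
    have hdiv : ∑' m, μ (returnBlock ξ m) = ∞ :=
      eq_top_mono (ENNReal.tsum_le_tsum hcle) (ENNReal.tsum_const_eq_top_of_ne_zero hc.ne')
    have hlimsup : limsup (returnBlock ξ) atTop ∈ ae μ :=
      (mem_ae_iff_prob_eq_one (MeasurableSet.measurableSet_limsup hmeasBlock)).mpr
        (measure_limsup_eq_one hmeasBlock hindepBlock hdiv)
    filter_upwards [hlimsup] with ω hω using mem_limsup_iff_frequently_mem.mp hω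
  have hlate : ∀ᵐ ω ∂μ, ∀ᶠ k in atTop, ξ k ω ≤ k := by
    have hsame (k : ℕ) : μ {ω | k < ξ k ω} = μ {ω | k < ξ 0 ω} :=
      (hident k 0).measure_mem_eq (s := Set.Ioi k) .of_discrete
    simpa using ae_eventually_notMem (s := fun k => {ω | k < ξ k ω}) (by
      rwa [tsum_congr hsame])
  filter_upwards [hfreq, hlate] with ω hfreq hlate
  obtain ⟨K, hK⟩ := eventually_atTop.mp hlate
  obtain ⟨m, hm, hblock⟩ := frequently_atTop.mp hfreq (∑ k ∈ Finset.range K, (ξ k ω + k))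
  have hearly : ∀ k < K, ξ k ω + k ≤ 2 ^ (m + 1) := fun k hk => by
    have := Finset.single_le_sum (f := fun k => ξ k ω + k) (fun _ _ => Nat.zero_le _)
      (Finset.mem_range.mpr hk)
    have := Nat.lt_two_pow_self (n := m)
    rw [pow_succ]; omega
  exact ⟨_, Nat.one_le_two_pow, xchain_two_pow_eq_zero ξ ω hearly hK
    fun k hk => Set.mem_iInter₂.mp hblock k hk⟩

/-- `ν = inf{n ≥ 1 : x_n = 0}` is almost surely finite. -/
theorem stmt_11 {Ω : Type*} [MeasurableSpace Ω] (μ : Measure Ω)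
    [IsProbabilityMeasure μ]
    (ξ : ℕ → Ω → ℕ) (hmeas : ∀ k, Measurable (ξ k))
    (hindep : iIndepFun ξ μ)
    (hident : ∀ k l : ℕ, IdentDistrib (ξ k) (ξ l) μ μ)
    (hpos : ∀ k ω, 1 ≤ ξ k ω)
    (hmean : ∫⁻ ω, (ξ 0 ω : ENNReal) ∂μ < ⊤)
    (hone : 0 < μ {ω | ξ 0 ω = 1}) :
    ∀ᵐ ω ∂μ, ∃ n : ℕ, 1 ≤ n ∧ xchain ξ n ω = 0 :=
  stmt_11_general μ ξ hmeas hindep hident hmean hone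
end

section
/- If two skeleton points Γ and Γ' with Γ < Γ' are given, then T[Γ, Γ'] = L[Γ, Γ']: the longest path between the two skeleton points equals the longest path in the restricted graph on {Γ, ..., Γ'}, and any maximal path in this restriction starts at Γ and ends at Γ'. -/
open MeasureTheory ProbabilityTheory Filter

/-!
A path in `{Γ, …, Γ'}` that does not start at `Γ` can be lengthened by prepending a path
from `Γ` to its first vertex, which exists because `Γ` is a skeleton point and stays in the
interval since edges point upwards; symmetrically at `Γ'`. Hence a longest path in
`{Γ, …, Γ'}` runs from `Γ` to `Γ'`, so it is also a longest path from `Γ` to `Γ'`. Conversely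
every path from `Γ` to `Γ'` lies in `{Γ, …, Γ'}`.
-/

def IsPath (ω : Cfg) (i j : ℤ) (l : List ℤ) : Prop :=
  l.IsChain (Edge ω) ∧ l.head? = some i ∧ l.getLast? = some j

section Paths

variable {ω : Cfg} {a b i j k : ℤ} {l : List ℤ}

lemma Leads.lt (h : Leads ω i j) : i < j := by
  induction h with
  | single h => exact h.1
  | tail _ h ih => exact ih.trans h.1

lemma Leads.exists_isPath (h : Leads ω i j) : ∃ p, IsPath ω i j p ∧ 2 ≤ p.length := by
  obtain ⟨m, hchain, hlast⟩ :=
    List.exists_isChain_cons_of_relationReflTransGen h.to_reflTransGen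
  have hm : m ≠ [] := by
    rintro rfl
    exact h.lt.ne hlast
  refine ⟨i :: m, ⟨hchain, rfl, ?_⟩, ?_⟩
  · rw [List.getLast?_eq_some_getLast (List.cons_ne_nil _ _), hlast]
  · simpa [Nat.succ_le_succ_iff, Nat.one_le_iff_ne_zero, List.length_eq_zero_iff] using hm

lemma IsPath.ne_nil (hl : IsPath ω i j l) : l ≠ [] := by
  rintro rfl
  simp [IsPath] at hl

lemma IsPath.mem_Icc (hl : IsPath ω i j l) {x : ℤ} (hx : x ∈ l) : i ≤ x ∧ x ≤ j := by
  obtain ⟨hchain, hhead, hlast⟩ := hl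
  have hpw : l.Pairwise (· < ·) := List.isChain_iff_pairwise.mp (hchain.imp fun _ _ e => e.1)
  constructor
  · obtain ⟨t, rfl⟩ := List.head?_eq_some_iff.mp hhead
    rcases List.mem_cons.mp hx with rfl | hx
    · exact le_rfl
    · exact (List.rel_of_pairwise_cons hpw hx).le
  · obtain ⟨t, rfl⟩ := List.getLast?_eq_some_iff.mp hlast
    rcases List.mem_append.mp hx with hx | hx
    · exact (List.pairwise_append.mp hpw).2.2 x hx j (List.mem_singleton_self j) |>.le
    · exact (List.mem_singleton.mp hx).le

lemma IsPath.isPathIn (hl : IsPath ω i j l) (hai : a ≤ i) (hjb : j ≤ b) :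
    IsPathIn ω a b l :=
  ⟨hl.ne_nil, hl.1, fun _ hx =>
    ⟨hai.trans (hl.mem_Icc hx).1, (hl.mem_Icc hx).2.trans hjb⟩⟩

lemma IsPathIn.exists_isPath (hl : IsPathIn ω a b l) :
    ∃ i j, IsPath ω i j l ∧ a ≤ i ∧ j ≤ b := by
  obtain ⟨hne, hchain, hmem⟩ := hl
  refine ⟨l.head hne, l.getLast hne, ⟨hchain, List.head?_eq_some_head hne,
    List.getLast?_eq_some_getLast hne⟩, (hmem _ (List.head_mem hne)).1,
    (hmem _ (List.getLast_mem hne)).2⟩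

lemma IsPathIn.length_le (hl : IsPathIn ω a b l) : l.length ≤ (b - a).toNat + 1 := by
  obtain ⟨-, hchain, hmem⟩ := hl
  have hnodup : l.Nodup :=
    (List.isChain_iff_pairwise.mp (hchain.imp fun _ _ e => e.1)).imp (fun h => h.ne)
  have hsub : l.toFinset ⊆ Finset.Icc a b := fun x hx =>
    Finset.mem_Icc.mpr (hmem x (List.mem_toFinset.mp hx))
  have := Finset.card_le_card hsub
  rw [List.toFinset_card_of_nodup hnodup, Int.card_Icc] at this
  omega

lemma IsPath.splice {p q : List ℤ} (hp : IsPath ω i j p) (hq : IsPath ω j k q) :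
    ∃ r, IsPath ω i k r ∧ r.length + 1 = p.length + q.length := by
  obtain ⟨hpc, hph, hpl⟩ := hp
  obtain ⟨hqc, hqh, hql⟩ := hq
  obtain ⟨p', rfl⟩ := List.getLast?_eq_some_iff.mp hpl
  obtain ⟨q', rfl⟩ := List.head?_eq_some_iff.mp hqh
  refine ⟨p' ++ [j] ++ q', ⟨hpc.append_overlap hqc (List.cons_ne_nil _ _), ?_, ?_⟩, ?_⟩
  · simpa using hph
  · simpa using hql
  · simp only [List.length_append, List.length_cons, List.length_nil]
    omega

lemma IsPath.exists_longer_of_leads_left (hl : IsPath ω i j l) (hki : Leads ω k i) :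
    ∃ l', IsPath ω k j l' ∧ l.length < l'.length := by
  obtain ⟨p, hp, hplen⟩ := hki.exists_isPath
  obtain ⟨r, hr, hrlen⟩ := hp.splice hl
  exact ⟨r, hr, by omega⟩

lemma IsPath.exists_longer_of_leads_right (hl : IsPath ω i j l) (hjk : Leads ω j k) :
    ∃ l', IsPath ω i k l' ∧ l.length < l'.length := by
  obtain ⟨p, hp, hplen⟩ := hjk.exists_isPath
  obtain ⟨r, hr, hrlen⟩ := hl.splice hp
  exact ⟨r, hr, by omega⟩

end Paths

section Lengths

variable {ω : Cfg} {a b : ℤ} {l : List ℤ}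

lemma bddAbove_lengths_isPathIn :
    BddAbove {n | ∃ l : List ℤ, IsPathIn ω a b l ∧ l.length = n + 1} :=
  ⟨(b - a).toNat, fun n ⟨_, hl, hlen⟩ => by have := hl.length_le; omega⟩

lemma lengths_isPath_subset_lengths_isPathIn :
    {n | ∃ l : List ℤ, l.IsChain (Edge ω) ∧ l.head? = some a ∧ l.getLast? = some b ∧
      l.length = n + 1} ⊆ {n | ∃ l : List ℤ, IsPathIn ω a b l ∧ l.length = n + 1} :=
  fun _ ⟨l, hchain, hhead, hlast, hlen⟩ =>
    ⟨l, IsPath.isPathIn ⟨hchain, hhead, hlast⟩ le_rfl le_rfl, hlen⟩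

lemma T_le_L : T ω a b ≤ L ω a b :=
  csSup_le_csSup' bddAbove_lengths_isPathIn lengths_isPath_subset_lengths_isPathIn

lemma IsPathIn.length_le_L (hl : IsPathIn ω a b l) : l.length ≤ L ω a b + 1 := by
  obtain ⟨x, t, rfl⟩ := List.exists_cons_of_ne_nil hl.1
  exact Nat.succ_le_succ (le_csSup bddAbove_lengths_isPathIn ⟨_, hl, rfl⟩)

lemma IsPath.length_le_T (hl : IsPath ω a b l) : l.length ≤ T ω a b + 1 := by
  obtain ⟨x, t, rfl⟩ := List.exists_cons_of_ne_nil hl.ne_nil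
  exact Nat.succ_le_succ <|
    le_csSup (bddAbove_lengths_isPathIn.mono lengths_isPath_subset_lengths_isPathIn)
      ⟨_, hl.1, hl.2.1, hl.2.2, rfl⟩

lemma exists_isPathIn_length_eq_L (hab : a ≤ b) :
    ∃ l, IsPathIn ω a b l ∧ l.length = L ω a b + 1 := by
  refine Nat.sSup_mem ?_ bddAbove_lengths_isPathIn
  exact ⟨0, [a], IsPath.isPathIn ⟨List.isChain_singleton a, rfl, rfl⟩ le_rfl hab, rfl⟩

end Lengths

lemma IsPathIn.isPath_of_length_eq_L {ω : Cfg} {Γ Γ' : ℤ} {l : List ℤ} (hΓ : Γ ∈ Skel ω)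
    (hΓ' : Γ' ∈ Skel ω) (hl : IsPathIn ω Γ Γ' l) (hlen : l.length = L ω Γ Γ' + 1) :
    IsPath ω Γ Γ' l := by
  obtain ⟨i, j, hp, hΓi, hjΓ'⟩ := hl.exists_isPath
  obtain rfl : i = Γ := by
    by_contra hne
    obtain ⟨l', hl', hlonger⟩ :=
      hp.exists_longer_of_leads_left (hΓ.1 i (lt_of_le_of_ne hΓi (Ne.symm hne)))
    have := (hl'.isPathIn le_rfl hjΓ').length_le_L
    omega
  obtain rfl : j = Γ' := by
    by_contra hne
    obtain ⟨l', hl', hlonger⟩ :=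
      hp.exists_longer_of_leads_right (hΓ'.2 j (lt_of_le_of_ne hjΓ' hne))
    have := (hl'.isPathIn le_rfl le_rfl).length_le_L
    omega
  exact hp

/-- between two skeleton points `Γ < Γ'`, `T[Γ,Γ'] = L[Γ,Γ']`,
and any maximal path in the restriction starts at `Γ` and ends at `Γ'`. -/
theorem stmt_19 (ω : Cfg) (Γ Γ' : ℤ) (hΓ : Γ ∈ Skel ω) (hΓ' : Γ' ∈ Skel ω)
    (hlt : Γ < Γ') :
    T ω Γ Γ' = L ω Γ Γ' ∧
    ∀ l : List ℤ, IsPathIn ω Γ Γ' l → l.length = L ω Γ Γ' + 1 →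
      l.head? = some Γ ∧ l.getLast? = some Γ' := by
  refine ⟨le_antisymm T_le_L ?_, fun l hl hlen => (hl.isPath_of_length_eq_L hΓ hΓ' hlen).2⟩
  obtain ⟨l, hl, hlen⟩ := exists_isPathIn_length_eq_L (ω := ω) hlt.le
  have := (hl.isPath_of_length_eq_L hΓ hΓ' hlen).length_le_T
  omega
end
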